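/- The one-relator group G = ⟨a, b | a^{b²} = a·a^{3b}⟩ is isomorphic to the semidirect product F ⋊ ℤ, where F = F(x,y) is the free group on two generators and the generator of ℤ acts on F by the automorphism φ with φ(x) = y and φ(y) = x·y³; under this isomorphism a corresponds to x ∈ F and b to the generator of ℤ. -/

import Mathlib

/-! In `F ⋊ ℤ` put `t = inr (ofAdd (-1))`; right conjugation by `t` acts on `F` as `φ`. Hence
`x^{t²} = φ²(x) = x y³ = x · φ(x³) = x · x^{3t}`, so `a ↦ x`, `b ↦ t` respects the relator.
Conversely `x ↦ a`, `y ↦ a^b` intertwines `φ` with right conjugation by `b`: on `x` this is the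
definition of the image of `y`, and on `y` it is exactly the relation `a · a^{3b} = a^{b²}`.
This gives a homomorphism `F ⋊ ℤ → G` with `t ↦ b`, and the two maps are mutually inverse on
generators. -/

namespace OneRelatorLCS

/-- The relator `(b⁻²ab²)⁻¹ · a · (b⁻¹a³b)` in the free group on `a = of 0`, `b = of 1`,
expressing the relation `a^{b²} = a·a^{3b}` (with `x^y = y⁻¹xy`). -/
def rel : FreeGroup (Fin 2) :=
  ((FreeGroup.of 1)⁻¹ * (FreeGroup.of 1)⁻¹ * FreeGroup.of 0 * FreeGroup.of 1 * FreeGroup.of 1)⁻¹ *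
    FreeGroup.of 0 *
    ((FreeGroup.of 1)⁻¹ * (FreeGroup.of 0) ^ 3 * FreeGroup.of 1)

/-- The one-relator group `G = ⟨a, b | a^{b²} = a·a^{3b}⟩`. -/
abbrev G : Type := PresentedGroup ({rel} : Set (FreeGroup (Fin 2)))

def a : G := PresentedGroup.of 0
def b : G := PresentedGroup.of 1

/-- The endomorphism `φ` of `F(x,y)`: `x ↦ y`, `y ↦ x·y³` (here `x = of 0`,
`y = of 1`). -/
def psi : FreeGroup (Fin 2) →* FreeGroup (Fin 2) :=
  FreeGroup.lift fun i => if i = 0 then FreeGroup.of 1 else FreeGroup.of 0 * (FreeGroup.of 1) ^ 3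

/-- The inverse of `φ`: `x ↦ y·x⁻³`, `y ↦ x`. -/
def chi : FreeGroup (Fin 2) →* FreeGroup (Fin 2) :=
  FreeGroup.lift fun i =>
    if i = 0 then FreeGroup.of 1 * ((FreeGroup.of 0) ^ 3)⁻¹ else FreeGroup.of 0

lemma chi_comp_psi : chi.comp psi = MonoidHom.id _ := by
  apply FreeGroup.ext_hom; intro i; fin_cases i <;> simp [psi, chi]

lemma psi_comp_chi : psi.comp chi = MonoidHom.id _ := by
  apply FreeGroup.ext_hom; intro i; fin_cases i <;> simp [psi, chi]

/-- The automorphism `φ` of the free group `F(x,y)` with `φ(x) = y`, `φ(y) = xy³`. -/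
def phiAut : MulAut (FreeGroup (Fin 2)) :=
  MonoidHom.toMulEquiv psi chi chi_comp_psi psi_comp_chi

/-- The action of `ℤ` on `F(x,y)` in which the generator `1 ∈ ℤ` acts by `φ`. -/
def theta : Multiplicative ℤ →* MulAut (FreeGroup (Fin 2)) :=
  zpowersHom _ phiAut

/-- The semidirect product `F(x,y) ⋊ ℤ` for this action. -/
abbrev Phi : Type := SemidirectProduct (FreeGroup (Fin 2)) (Multiplicative ℤ) theta

open SemidirectProduct Multiplicative

section IntSemidirect

variable {N H : Type*} [Group N] [Group H]

theorem map_zpow_apply_of_map_apply (φ : MulAut N) (f : N →* H) (h : H)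
    (hf : ∀ n, f (φ n) = h * f n * h⁻¹) (k : ℤ) (n : N) :
    f ((φ ^ k) n) = h ^ k * f n * (h ^ k)⁻¹ := by
  induction k using Int.induction_on generalizing n with
  | zero => simp
  | succ k ih =>
    rw [zpow_add_one, MulAut.mul_apply, ih, hf, zpow_add_one]
    group
  | pred k ih =>
    have hf_inv : f (φ⁻¹ n) = h⁻¹ * f n * h := by
      have h_self := hf (φ⁻¹ n)
      rw [MulAut.apply_inv_self] at h_self
      rw [h_self]
      group
    rw [zpow_sub_one, MulAut.mul_apply, ih, hf_inv, zpow_sub_one]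
    group

variable (θ : Multiplicative ℤ →* MulAut N)

def liftInt (f : N →* H) (h : H) (hf : ∀ n, f (θ (ofAdd 1) n) = h * f n * h⁻¹) :
    N ⋊[θ] Multiplicative ℤ →* H :=
  SemidirectProduct.lift f (zpowersHom H h) fun g => by
    ext n
    simp only [MonoidHom.comp_apply, MulEquiv.coe_toMonoidHom, zpowersHom_apply,
      MulAut.conj_apply, MonoidHom.apply_mint _ θ g]
    exact map_zpow_apply_of_map_apply _ f h hf g.toAdd n

theorem liftInt_inl (f : N →* H) (h : H) (hf : ∀ n, f (θ (ofAdd 1) n) = h * f n * h⁻¹)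
    (n : N) : liftInt θ f h hf (inl n) = f n :=
  lift_inl _ _ _ _

theorem liftInt_inr (f : N →* H) (h : H) (hf : ∀ n, f (θ (ofAdd 1) n) = h * f n * h⁻¹)
    (k : Multiplicative ℤ) : liftInt θ f h hf (inr k) = h ^ k.toAdd :=
  lift_inr _ _ _ _

theorem inv_inr_mul_inl_mul_inr_ofAdd_neg_one (n : N) :
    (inr (ofAdd (-1 : ℤ)))⁻¹ * inl n * inr (ofAdd (-1 : ℤ)) =
      (inl (θ (ofAdd 1) n) : N ⋊[θ] Multiplicative ℤ) := by
  simp [inl_aut]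

end IntSemidirect

theorem map_rel_eq_one_iff {H : Type*} [Group H] (f : FreeGroup (Fin 2) →* H) :
    f rel = 1 ↔
      (f (.of 1))⁻¹ * (f (.of 1))⁻¹ * f (.of 0) * f (.of 1) * f (.of 1) =
        f (.of 0) * ((f (.of 1))⁻¹ * f (.of 0) ^ 3 * f (.of 1)) := by
  simp only [rel, map_mul, map_inv, map_pow, mul_assoc (_)⁻¹, inv_mul_eq_one]

theorem a_conj_b_sq_eq : b⁻¹ * b⁻¹ * a * b * b = a * (b⁻¹ * a ^ 3 * b) :=
  (map_rel_eq_one_iff (PresentedGroup.mk _)).1 (PresentedGroup.one_of_mem rfl)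

theorem phiAut_phiAut_of_zero :
    phiAut (phiAut (.of 0)) = .of 0 * phiAut (.of 0 ^ 3 : FreeGroup (Fin 2)) := by
  simp [phiAut, psi]

theorem theta_ofAdd_one : theta (ofAdd 1) = phiAut := by
  simp [theta]

theorem inv_inr_mul_inl_mul_inr_eq_phiAut (n : FreeGroup (Fin 2)) :
    (inr (ofAdd (-1 : ℤ)) : Phi)⁻¹ * inl n * inr (ofAdd (-1 : ℤ)) = inl (phiAut n) := by
  rw [inv_inr_mul_inl_mul_inr_ofAdd_neg_one, theta_ofAdd_one]

theorem lift_rel_eq_one :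
    FreeGroup.lift ![(inl (.of 0) : Phi), inr (ofAdd (-1))] rel = 1 := by
  rw [map_rel_eq_one_iff]
  simp only [FreeGroup.lift_apply_of, Matrix.cons_val_zero, Matrix.cons_val_one]
  calc (inr (ofAdd (-1)))⁻¹ * (inr (ofAdd (-1)))⁻¹ * inl (.of 0) * inr (ofAdd (-1)) *
        inr (ofAdd (-1))
      = (inr (ofAdd (-1)))⁻¹ * ((inr (ofAdd (-1)))⁻¹ * inl (.of 0) * inr (ofAdd (-1))) *
        inr (ofAdd (-1)) := by group
    _ = inl (phiAut (phiAut (.of 0))) := by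
      rw [inv_inr_mul_inl_mul_inr_eq_phiAut, inv_inr_mul_inl_mul_inr_eq_phiAut]
    _ = inl (.of 0) * inl (phiAut (.of 0 ^ 3)) := by rw [phiAut_phiAut_of_zero, map_mul]
    _ = _ := by rw [← inv_inr_mul_inl_mul_inr_eq_phiAut, map_pow]

def toSemidirect : G →* Phi :=
  PresentedGroup.toGroup fun _ hr => (Set.mem_singleton_iff.1 hr) ▸ lift_rel_eq_one

def freeToG : FreeGroup (Fin 2) →* G :=
  FreeGroup.lift ![a, b⁻¹ * a * b]

theorem freeToG_phiAut (n : FreeGroup (Fin 2)) :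
    freeToG (phiAut n) = b⁻¹ * freeToG n * b⁻¹⁻¹ := by
  have h : freeToG.comp psi = (MulAut.conj b⁻¹).toMonoidHom.comp freeToG := by
    refine FreeGroup.ext_hom _ _ (Fin.forall_fin_two.2 ⟨?_, ?_⟩)
    · simp [freeToG, psi]
    · have h3 : (b⁻¹ * a * b) ^ 3 = b⁻¹ * a ^ 3 * b := by
        simpa using conj_pow (a := b⁻¹) (b := a) (i := 3)
      simp [freeToG, psi, h3, ← a_conj_b_sq_eq]
      group
  exact DFunLike.congr_fun h n

def ofSemidirect : Phi →* G :=
  liftInt theta freeToG b⁻¹ fun n => by rw [theta_ofAdd_one]; exact freeToG_phiAut n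

theorem toSemidirect_a : toSemidirect a = inl (.of 0) :=
  PresentedGroup.toGroup.of _

theorem toSemidirect_b : toSemidirect b = inr (ofAdd (-1)) :=
  PresentedGroup.toGroup.of _

theorem ofSemidirect_inl (n : FreeGroup (Fin 2)) : ofSemidirect (inl n) = freeToG n :=
  liftInt_inl _ _ _ _ _

theorem ofSemidirect_inr (k : Multiplicative ℤ) : ofSemidirect (inr k) = b⁻¹ ^ k.toAdd :=
  liftInt_inr _ _ _ _ _

theorem ofSemidirect_comp_toSemidirect : ofSemidirect.comp toSemidirect = MonoidHom.id G := by
  refine PresentedGroup.ext (Fin.forall_fin_two.2 ⟨?_, ?_⟩)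
  · change ofSemidirect (toSemidirect a) = a
    simp [toSemidirect_a, ofSemidirect_inl, freeToG]
  · change ofSemidirect (toSemidirect b) = b
    simp [toSemidirect_b, ofSemidirect_inr]

theorem toSemidirect_comp_ofSemidirect : toSemidirect.comp ofSemidirect = MonoidHom.id Phi := by
  refine SemidirectProduct.hom_ext
    (FreeGroup.ext_hom _ _ (Fin.forall_fin_two.2 ⟨?_, ?_⟩)) (MonoidHom.ext_mint ?_)
  · simp [ofSemidirect_inl, freeToG, toSemidirect_a]
  · simp only [MonoidHom.comp_apply, ofSemidirect_inl, freeToG, FreeGroup.lift_apply_of,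
      Matrix.cons_val_one, Matrix.cons_val_zero, map_mul, map_inv]
    rw [toSemidirect_a, toSemidirect_b, inv_inr_mul_inl_mul_inr_eq_phiAut]
    simp [phiAut, psi]
  · simp [ofSemidirect_inr, toSemidirect_b]

/-- `G = ⟨a, b | a^{b²} = a·a^{3b}⟩` is isomorphic to `F(x,y) ⋊ ℤ`, where the
generator of `ℤ` acts by the automorphism `φ : x ↦ y, y ↦ xy³`; under the
isomorphism, `a` corresponds to `x ∈ F(x,y)` and `b` to the generator of `ℤ`.

(Since the paper's convention is right conjugation `x^y = y⁻¹xy`, while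
Mathlib's semidirect product uses `inr g * inl n * (inr g)⁻¹ = inl (θ g n)`,
the element `b` — whose *right* conjugation action `f ↦ b⁻¹fb` on `F` is `φ` —
corresponds to the generator `ofAdd (-1)` of `ℤ`.) -/
theorem iso_semidirect_free :
    ∃ e : G ≃* Phi,
      e a = SemidirectProduct.inl (FreeGroup.of 0) ∧
      e b = SemidirectProduct.inr (Multiplicative.ofAdd (-1 : ℤ)) :=
  ⟨toSemidirect.toMulEquiv ofSemidirect ofSemidirect_comp_toSemidirect
    toSemidirect_comp_ofSemidirect, toSemidirect_a, toSemidirect_b⟩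

end OneRelatorLCS
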